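/- arXiv:2209.12015 — 2 statements merged into one kernel-verified Lean document; each statement's English description precedes it below -/
import Mathlib

section
/- For a group π, the quotient Z[π]^σ / ⟨1, g + g⁻¹ : g ∈ π∖{1}⟩ is isomorphic as an abelian group to the F₂-vector space F₂[T] on the set T of nontrivial elements of π of order 2, the isomorphism induced by the inclusion T ⊆ π. -/
open Finsupp

/-- The involution `σ` on the integral group ring `ℤ[π]` (as `π →₀ ℤ`) induced by `g ↦ g⁻¹`. -/
noncomputable def sigmaFull (π : Type*) [Group π] : (π →₀ ℤ) →+ (π →₀ ℤ) :=
  Finsupp.mapDomain.addMonoidHom fun g => g⁻¹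

/-- The fixed subgroup `ℤ[π]^σ`. -/
noncomputable def FixFull (π : Type*) [Group π] : AddSubgroup (π →₀ ℤ) where
  carrier := {x | sigmaFull π x = x}
  add_mem' := by
    intro a b ha hb
    simp only [Set.mem_setOf_eq, map_add] at *
    rw [ha, hb]
  zero_mem' := by simp
  neg_mem' := by
    intro a ha
    simp only [Set.mem_setOf_eq, map_neg] at *
    rw [ha]

/-- The subgroup of `ℤ[π]` generated by `1` and the norms `g + g⁻¹` for `g ≠ 1`. -/
noncomputable def normSub (π : Type*) [Group π] : AddSubgroup (π →₀ ℤ) :=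
  AddSubgroup.closure ({Finsupp.single (1 : π) (1 : ℤ)} ∪
    {x | ∃ g : π, g ≠ 1 ∧ x = Finsupp.single g (1 : ℤ) + Finsupp.single g⁻¹ 1})

/-- The same subgroup, viewed inside the fixed subgroup `ℤ[π]^σ`. -/
noncomputable def normSub' (π : Type*) [Group π] : AddSubgroup (FixFull π) :=
  (normSub π).comap (FixFull π).subtype

section Aux

variable (π : Type*) [Group π]

/-- The set of nontrivial elements of order 2. -/
abbrev myT := {g : π // g ≠ 1 ∧ g * g = 1}

open Classical in
/-- The reduction map `ℤ[π] → 𝔽₂[T]`. -/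
noncomputable def myPhi : (π →₀ ℤ) →+ (myT π →₀ ZMod 2) :=
  Finsupp.liftAddHom fun g =>
    if h : g ≠ 1 ∧ g * g = 1 then
      (Finsupp.singleAddHom (⟨g, h⟩ : myT π)).comp (Int.castAddHom (ZMod 2))
    else 0

variable {π}

lemma myPhi_single_t (t : myT π) (n : ℤ) :
    myPhi π (Finsupp.single t.1 n) = Finsupp.single t (n : ZMod 2) := by
  rw [myPhi, Finsupp.liftAddHom_apply_single, dif_pos t.2]
  rfl

lemma myPhi_single_not {g : π} (h : ¬ (g ≠ 1 ∧ g * g = 1)) (n : ℤ) :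
    myPhi π (Finsupp.single g n) = 0 := by
  rw [myPhi, Finsupp.liftAddHom_apply_single, dif_neg h]
  rfl

lemma sigma_fixed {x : π →₀ ℤ} (hx : x ∈ FixFull π) (g : π) : x g⁻¹ = x g := by
  conv_lhs => rw [show x = sigmaFull π x from hx.symm]
  exact Finsupp.mapDomain_apply inv_injective x g

lemma single_one_mem_fix : Finsupp.single (1 : π) (1 : ℤ) ∈ FixFull π := by
  show Finsupp.mapDomain (fun g : π => g⁻¹) _ = _
  rw [Finsupp.mapDomain_single, inv_one]

lemma single_t_mem_fix (t : myT π) : Finsupp.single t.1 (1 : ℤ) ∈ FixFull π := by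
  show Finsupp.mapDomain (fun g : π => g⁻¹) _ = _
  rw [Finsupp.mapDomain_single, inv_eq_of_mul_eq_one_right t.2.2]

lemma pair_mem_fix (g : π) :
    Finsupp.single g (1 : ℤ) + Finsupp.single g⁻¹ 1 ∈ FixFull π := by
  show Finsupp.mapDomain (fun g : π => g⁻¹) _ = _
  rw [Finsupp.mapDomain_add, Finsupp.mapDomain_single, Finsupp.mapDomain_single, inv_inv,
    add_comm]

lemma inv_sq_ne {g : π} (hg1 : g ≠ 1) (hg2 : g * g ≠ 1) :
    ¬ (g⁻¹ ≠ 1 ∧ g⁻¹ * g⁻¹ = 1) := by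
  rintro ⟨-, h2⟩
  apply hg2
  have := congrArg (·⁻¹) h2
  simpa [mul_inv_rev] using this

lemma myPhi_pair {g : π} (hg1 : g ≠ 1) :
    myPhi π (Finsupp.single g (1 : ℤ) + Finsupp.single g⁻¹ 1) = 0 := by
  by_cases hg2 : g * g = 1
  · have hginv : g⁻¹ = g := inv_eq_of_mul_eq_one_right hg2
    rw [hginv, ← Finsupp.single_add, myPhi_single_t ⟨g, hg1, hg2⟩]
    norm_num
    rfl
  · rw [map_add, myPhi_single_not (by tauto), myPhi_single_not (inv_sq_ne hg1 hg2), add_zero]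

lemma myPhi_normSub {x : π →₀ ℤ} (hx : x ∈ normSub π) : myPhi π x = 0 := by
  induction hx using AddSubgroup.closure_induction with
  | mem y hy =>
    rcases hy with hy | ⟨g, hg1, rfl⟩
    · rw [Set.mem_singleton_iff.mp hy, myPhi_single_not (by simp)]
    · exact myPhi_pair hg1
  | zero => exact map_zero _
  | add a b ha hb iha ihb => rw [map_add, iha, ihb, add_zero]
  | neg a ha iha => rw [map_neg, iha, neg_zero]

variable (π)

/-- `single t 1` as an element of the fixed subgroup. -/
noncomputable def myElt (t : myT π) : FixFull π := ⟨Finsupp.single t.1 1, single_t_mem_fix t⟩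

lemma two_smul_myElt_mem (t : myT π) : (2 : ℤ) • myElt π t ∈ normSub' π := by
  show (2 : ℤ) • Finsupp.single t.1 (1 : ℤ) ∈ normSub π
  have : (2 : ℤ) • Finsupp.single t.1 (1 : ℤ)
      = Finsupp.single t.1 (1 : ℤ) + Finsupp.single t.1⁻¹ 1 := by
    rw [inv_eq_of_mul_eq_one_right t.2.2, ← Finsupp.single_add]
    simp [Finsupp.smul_single]
  rw [this]
  exact AddSubgroup.subset_closure (Or.inr ⟨t.1, t.2.1, rfl⟩)

/-- The inverse map `𝔽₂[T] → ℤ[π]^σ / ⟨…⟩`. -/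
noncomputable def myPsi : (myT π →₀ ZMod 2) →+ (FixFull π ⧸ normSub' π) :=
  Finsupp.liftAddHom fun t =>
    ZMod.lift 2 ⟨zmultiplesHom _ (QuotientAddGroup.mk (myElt π t)), by
      show ((2 : ℕ) : ℤ) • _ = (0 : FixFull π ⧸ normSub' π)
      rw [show (((2 : ℕ) : ℤ) • QuotientAddGroup.mk (myElt π t) :
            FixFull π ⧸ normSub' π) = QuotientAddGroup.mk (((2:ℕ):ℤ) • myElt π t) from rfl]
      exact (QuotientAddGroup.eq_zero_iff _).mpr (by exact_mod_cast two_smul_myElt_mem π t)⟩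

lemma myPsi_single (t : myT π) (n : ℤ) :
    myPsi π (Finsupp.single t (n : ZMod 2))
      = n • QuotientAddGroup.mk (myElt π t) := by
  rw [myPsi, Finsupp.liftAddHom_apply_single, ZMod.lift_coe]
  exact zmultiplesHom_apply _ _ _

/-- The forward map on the quotient. -/
noncomputable def myE : (FixFull π ⧸ normSub' π) →+ (myT π →₀ ZMod 2) :=
  QuotientAddGroup.lift (normSub' π) ((myPhi π).comp (FixFull π).subtype)
    (fun x hx => myPhi_normSub hx)

lemma myE_mk (x : FixFull π) : myE π (QuotientAddGroup.mk x) = myPhi π x.1 := rfl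

variable {π}

lemma key (n : ℕ) : ∀ (x : π →₀ ℤ) (hx : x ∈ FixFull π), x.support.card ≤ n →
    myPsi π (myPhi π x) = QuotientAddGroup.mk (⟨x, hx⟩ : FixFull π) := by
  classical
  induction n with
  | zero =>
    intro x hx hcard
    have : x = 0 := Finsupp.card_support_eq_zero.mp (Nat.le_zero.mp hcard)
    subst this
    rw [map_zero, map_zero]
    exact ((QuotientAddGroup.eq_zero_iff _).mpr (zero_mem _)).symm
  | succ n ih =>
    intro x hx hcard
    rcases eq_or_ne x 0 with rfl | hx0
    · rw [map_zero, map_zero]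
      symm
      exact (QuotientAddGroup.eq_zero_iff _).mpr (zero_mem _)
    obtain ⟨g, hg⟩ := Finsupp.support_nonempty_iff.mpr hx0
    have hgx : x g ≠ 0 := Finsupp.mem_support_iff.mp hg
    set c : ℤ := x g with hc
    -- the generator `s` to subtract
    by_cases hg1 : g = 1
    · -- case g = 1
      subst hg1
      set s : π →₀ ℤ := Finsupp.single (1 : π) 1 with hs
      have hsfix : s ∈ FixFull π := single_one_mem_fix
      set y : π →₀ ℤ := x - c • s with hy
      have hyfix : y ∈ FixFull π := sub_mem hx (zsmul_mem hsfix c)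
      have hysupp : y.support ⊆ x.support.erase 1 := by
        intro a ha
        rw [Finsupp.mem_support_iff] at ha
        have hya : y a = x a - c * (Finsupp.single (1:π) (1:ℤ)) a := by
          simp only [hy, hs, Finsupp.sub_apply, Finsupp.smul_apply, smul_eq_mul]
        have hne : a ≠ 1 := by
          rintro rfl
          apply ha
          rw [hya, Finsupp.single_apply, if_pos rfl, mul_one, ← hc, sub_self]
        have hxa : x a ≠ 0 := by
          intro h0
          apply ha
          rw [hya, h0, Finsupp.single_apply, if_neg (fun h => hne h.symm)]
          ring
        exact Finset.mem_erase.mpr ⟨hne, Finsupp.mem_support_iff.mpr hxa⟩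
      have hycard : y.support.card ≤ n := by
        have h1 := Finset.card_le_card hysupp
        have h2 := Finset.card_erase_of_mem hg
        omega
      have hxy : (⟨x, hx⟩ : FixFull π) = ⟨y, hyfix⟩ + c • ⟨s, hsfix⟩ := by
        apply Subtype.ext
        simp [hy]
      have hphix : myPhi π x = myPhi π y := by
        rw [show x = y + c • s by simp [hy], map_add, map_zsmul,
          show myPhi π s = 0 from myPhi_single_not (by simp) 1]
        simp
      rw [hphix, ih y hyfix hycard, hxy, QuotientAddGroup.mk_add]
      have : (QuotientAddGroup.mk (c • (⟨s, hsfix⟩ : FixFull π))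
          : FixFull π ⧸ normSub' π) = c • QuotientAddGroup.mk ⟨s, hsfix⟩ := rfl
      rw [this, (QuotientAddGroup.eq_zero_iff _).mpr
        (show (⟨s, hsfix⟩ : FixFull π) ∈ normSub' π from
          AddSubgroup.subset_closure (Or.inl rfl))]
      simp
    by_cases hg2 : g * g = 1
    · -- case g ∈ T
      set t : myT π := ⟨g, hg1, hg2⟩ with ht
      set s : π →₀ ℤ := Finsupp.single g 1 with hs
      have hsfix : s ∈ FixFull π := single_t_mem_fix t
      set y : π →₀ ℤ := x - c • s with hy
      have hyfix : y ∈ FixFull π := sub_mem hx (zsmul_mem hsfix c)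
      have hysupp : y.support ⊆ x.support.erase g := by
        intro a ha
        rw [Finsupp.mem_support_iff] at ha
        have hya : y a = x a - c * (Finsupp.single g (1:ℤ)) a := by
          simp only [hy, hs, Finsupp.sub_apply, Finsupp.smul_apply, smul_eq_mul]
        have hne : a ≠ g := by
          rintro rfl
          apply ha
          rw [hya, Finsupp.single_apply, if_pos rfl, mul_one, ← hc, sub_self]
        have hxa : x a ≠ 0 := by
          intro h0
          apply ha
          rw [hya, h0, Finsupp.single_apply, if_neg (fun h => hne h.symm)]
          ring
        exact Finset.mem_erase.mpr ⟨hne, Finsupp.mem_support_iff.mpr hxa⟩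
      have hycard : y.support.card ≤ n := by
        have h1 := Finset.card_le_card hysupp
        have h2 := Finset.card_erase_of_mem hg
        omega
      have hxy : (⟨x, hx⟩ : FixFull π) = ⟨y, hyfix⟩ + c • ⟨s, hsfix⟩ := by
        apply Subtype.ext
        simp [hy]
      have hphix : myPhi π x = myPhi π y + Finsupp.single t (c : ZMod 2) := by
        rw [show x = y + c • s by simp [hy], map_add, map_zsmul,
          show myPhi π s = Finsupp.single t ((1:ℤ) : ZMod 2) from myPhi_single_t t 1,
          Int.cast_one, Finsupp.smul_single, zsmul_one]
      rw [hphix, map_add, ih y hyfix hycard, myPsi_single, hxy, QuotientAddGroup.mk_add]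
      rfl
    · -- case g ∉ T, g ≠ 1
      set s : π →₀ ℤ := Finsupp.single g 1 + Finsupp.single g⁻¹ 1 with hs
      have hsfix : s ∈ FixFull π := pair_mem_fix g
      have hginv : g⁻¹ ≠ g := fun h => hg2 (by nth_rewrite 1 [← h]; exact inv_mul_cancel g)
      have hgxinv : x g⁻¹ = c := sigma_fixed hx g
      set y : π →₀ ℤ := x - c • s with hy
      have hyfix : y ∈ FixFull π := sub_mem hx (zsmul_mem hsfix c)
      have hginvmem : g⁻¹ ∈ x.support.erase g := by
        rw [Finset.mem_erase, Finsupp.mem_support_iff, hgxinv]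
        exact ⟨hginv, hgx⟩
      have hysupp : y.support ⊆ (x.support.erase g).erase g⁻¹ := by
        intro a ha
        rw [Finsupp.mem_support_iff] at ha
        have hya : y a = x a - c * ((Finsupp.single g (1:ℤ)) a
            + (Finsupp.single g⁻¹ (1:ℤ)) a) := by
          simp only [hy, hs, Finsupp.sub_apply, Finsupp.smul_apply, smul_eq_mul,
            Finsupp.add_apply]
        have hne1 : a ≠ g⁻¹ := by
          rintro rfl
          apply ha
          rw [hya, hgxinv, Finsupp.single_apply, Finsupp.single_apply,
            if_neg (fun h => hginv h.symm), if_pos rfl]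
          ring
        have hne2 : a ≠ g := by
          rintro rfl
          apply ha
          rw [hya, Finsupp.single_apply, Finsupp.single_apply, if_pos rfl,
            if_neg (fun h => hginv h), ← hc]
          ring
        have hxa : x a ≠ 0 := by
          intro h0
          apply ha
          rw [hya, h0, Finsupp.single_apply, Finsupp.single_apply,
            if_neg (fun h => hne2 h.symm), if_neg (fun h => hne1 h.symm)]
          ring
        exact Finset.mem_erase.mpr ⟨hne1, Finset.mem_erase.mpr
          ⟨hne2, Finsupp.mem_support_iff.mpr hxa⟩⟩
      have hycard : y.support.card ≤ n := by
        have h1 := Finset.card_le_card hysupp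
        have h2 := Finset.card_erase_of_mem hg
        have h3 := Finset.card_erase_of_mem hginvmem
        omega
      have hxy : (⟨x, hx⟩ : FixFull π) = ⟨y, hyfix⟩ + c • ⟨s, hsfix⟩ := by
        apply Subtype.ext
        simp [hy]
      have hphix : myPhi π x = myPhi π y := by
        rw [show x = y + c • s by simp [hy], map_add, map_zsmul,
          show myPhi π s = 0 from myPhi_pair hg1]
        simp
      rw [hphix, ih y hyfix hycard, hxy, QuotientAddGroup.mk_add]
      have h4 : (QuotientAddGroup.mk (c • (⟨s, hsfix⟩ : FixFull π))
          : FixFull π ⧸ normSub' π) = c • QuotientAddGroup.mk ⟨s, hsfix⟩ := rfl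
      rw [h4, (QuotientAddGroup.eq_zero_iff _).mpr
        (show (⟨s, hsfix⟩ : FixFull π) ∈ normSub' π from
          AddSubgroup.subset_closure (Or.inr ⟨g, hg1, rfl⟩))]
      simp

end Aux

/-- `ℤ[π]^σ / ⟨1, g + g⁻¹⟩ ≅ 𝔽₂[T]`, where `T` is the set of nontrivial elements of
order two, via the map induced by the inclusion `T ⊆ π`. -/
theorem stmt3 (π : Type*) [Group π] :
    ∃ e : (FixFull π ⧸ normSub' π) ≃+ ({g : π // g ≠ 1 ∧ g * g = 1} →₀ ZMod 2),
      ∀ t : {g : π // g ≠ 1 ∧ g * g = 1},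
        e (QuotientAddGroup.mk (⟨Finsupp.single t.1 1, by
            show sigmaFull π (Finsupp.single t.1 1) = Finsupp.single t.1 1
            show Finsupp.mapDomain (fun g : π => g⁻¹) (Finsupp.single t.1 1) = _
            rw [Finsupp.mapDomain_single, inv_eq_of_mul_eq_one_right t.2.2]⟩ : FixFull π))
          = Finsupp.single t 1 := by
  have h1 : (myPsi π).comp (myE π) = AddMonoidHom.id _ := by
    apply AddMonoidHom.ext
    intro q
    induction q using QuotientAddGroup.induction_on with
    | H x =>
      show myPsi π (myE π (QuotientAddGroup.mk x)) = QuotientAddGroup.mk x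
      rw [myE_mk, key x.1.support.card x.1 x.2 le_rfl]
  have h2 : (myE π).comp (myPsi π) = AddMonoidHom.id _ := by
    apply Finsupp.addHom_ext
    intro t a
    obtain ⟨n, rfl⟩ := ZMod.intCast_surjective a
    show myE π (myPsi π (Finsupp.single t (n : ZMod 2))) = Finsupp.single t (n : ZMod 2)
    rw [myPsi_single, map_zsmul,
      show myE π (QuotientAddGroup.mk (myElt π t)) = myPhi π (Finsupp.single t.1 1) from rfl,
      myPhi_single_t]
    simp [Finsupp.smul_single, zsmul_one]
  refine ⟨AddMonoidHom.toAddEquiv (myE π) (myPsi π) h1 h2, fun t => ?_⟩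
  show myE π (QuotientAddGroup.mk _) = _
  rw [show (⟨Finsupp.single t.1 1, _⟩ : FixFull π) = myElt π t from rfl]
  rw [show myE π (QuotientAddGroup.mk (myElt π t)) = myPhi π (Finsupp.single t.1 1) from rfl,
    myPhi_single_t]
  norm_num
end

section
/- For a polynomial f ∈ t·Z[t] with f ≠ 0 (i.e., with zero constant term), the quotient t·Z[t]/(f·Z[t] ∩ t·Z[t]) is a finitely generated abelian group if and only if the leading coefficient of f is 1 or −1. -/
open Polynomial

/-- The subgroup `t·ℤ[t]` of polynomials with zero constant term. -/
noncomputable def tIdeal : AddSubgroup (Polynomial ℤ) where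
  carrier := {p | p.coeff 0 = 0}
  add_mem' := by
    intro a b ha hb
    simp only [Set.mem_setOf_eq, coeff_add] at *
    rw [ha, hb, add_zero]
  zero_mem' := by simp
  neg_mem' := by
    intro a ha
    simp only [Set.mem_setOf_eq, coeff_neg] at *
    rw [ha, neg_zero]

/-- The subgroup `f·ℤ[t] = {f·p : p ∈ ℤ[t]}` of multiples of `f`. -/
noncomputable def mulRange (f : Polynomial ℤ) : AddSubgroup (Polynomial ℤ) :=
  (AddMonoidHom.mulLeft f).range

lemma mem_tIdeal {p : Polynomial ℤ} : p ∈ tIdeal ↔ p.coeff 0 = 0 := Iff.rfl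
lemma mem_mulRange {f p : Polynomial ℤ} : p ∈ mulRange f ↔ ∃ q, f * q = p := by
  simp [mulRange, AddMonoidHom.mem_range, AddMonoidHom.mulLeft]
lemma natDeg_pos (f : Polynomial ℤ) (hf : f ≠ 0) (h0 : f.coeff 0 = 0) :
    1 ≤ f.natDegree := by
  by_contra h
  push_neg at h
  interval_cases hh : f.natDegree
  · exact hf (by rw [eq_C_of_natDegree_eq_zero hh, h0, map_zero])

-- small-degree polys with zero constant term lie in closure of X^1..X^d
lemma mem_closure_pows {d : ℕ} {r : Polynomial ℤ} (h0 : r.coeff 0 = 0)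
    (hd : r.natDegree ≤ d) :
    r ∈ AddSubgroup.closure ((fun i : ℕ => (X : Polynomial ℤ) ^ (i + 1)) '' Set.Iio d) := by
  have := Polynomial.as_sum_range' r (d+1) (Nat.lt_succ_of_le hd)
  rw [this]
  apply AddSubgroup.sum_mem
  intro i hi
  rcases Nat.eq_zero_or_pos i with rfl | hipos
  · simp only [h0, monomial_zero_right]
    exact AddSubgroup.zero_mem _
  · rw [← Polynomial.C_mul_X_pow_eq_monomial, ← Polynomial.smul_eq_C_mul]
    apply AddSubgroup.zsmul_mem
    apply AddSubgroup.subset_closure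
    have hi' := Finset.mem_range.mp hi
    refine ⟨i - 1, ?_, ?_⟩
    · simp only [Set.mem_Iio]; omega
    · show X ^ (i - 1 + 1) = X ^ i
      rw [Nat.sub_add_cancel hipos]

lemma bwd (f : Polynomial ℤ) (hf : f ≠ 0) (h0 : f.coeff 0 = 0)
    (hlc : f.leadingCoeff = 1 ∨ f.leadingCoeff = -1) :
    AddGroup.FG (↥tIdeal ⧸ ((mulRange f).comap tIdeal.subtype)) := by
  set H := (mulRange f).comap tIdeal.subtype with hH
  set d := f.natDegree with hd
  have hd1 : 1 ≤ d := natDeg_pos f hf h0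
  set g : Polynomial ℤ := C f.leadingCoeff * f with hg
  have hu : f.leadingCoeff * f.leadingCoeff = 1 := by
    rcases hlc with h | h <;> rw [h] <;> ring
  have hgmonic : g.Monic := by
    unfold Polynomial.Monic
    rw [hg, leadingCoeff_mul, leadingCoeff_C, hu]
  have hlc0 : f.leadingCoeff ≠ 0 := leadingCoeff_ne_zero.mpr hf
  have hgf : ∀ q, g * q ∈ mulRange f := fun q =>
    mem_mulRange.mpr ⟨C f.leadingCoeff * q, by rw [hg]; ring⟩
  have hgd : g.natDegree = d := by
    rw [hg, natDegree_C_mul hlc0]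
  rw [AddGroup.fg_iff]
  set T : Set ↥tIdeal :=
    (fun i : ℕ => (⟨X ^ (i+1), by simp [mem_tIdeal, coeff_X_pow]⟩ : ↥tIdeal)) '' Set.Iio d with hT
  refine ⟨QuotientAddGroup.mk' H '' T, ?_, ((Set.finite_Iio d).image _).image _⟩
  rw [← AddMonoidHom.map_closure, AddSubgroup.eq_top_iff']
  intro x
  obtain ⟨⟨p, hp⟩, rfl⟩ := QuotientAddGroup.mk'_surjective H x
  have hdiv := modByMonic_add_div p g
  set r := p %ₘ g with hr
  have hrp : r = p - g * (p /ₘ g) := by rw [hr, eq_sub_iff_add_eq, hdiv]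
  have hg0 : g.coeff 0 = 0 := by rw [hg, coeff_C_mul, h0, mul_zero]
  have hr0 : r.coeff 0 = 0 := by
    rw [hrp, coeff_sub, hp, mul_coeff_zero, hg0, zero_mul, sub_zero]
  have hrd : r.natDegree ≤ d := by
    rcases eq_or_ne r 0 with h | h
    · simp [h]
    · have := degree_modByMonic_lt p hgmonic
      rw [← hr] at this
      have h2 := natDegree_lt_natDegree h this
      omega
  have key : (⟨r, hr0⟩ : ↥tIdeal) ∈ AddSubgroup.closure T := by
    rw [← AddSubgroup.mem_map_iff_mem (AddSubgroup.subtype_injective tIdeal),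
      AddMonoidHom.map_closure]
    have : tIdeal.subtype '' T = (fun i : ℕ => (X : Polynomial ℤ) ^ (i + 1)) '' Set.Iio d := by
      rw [hT, ← Set.image_comp]; rfl
    rw [this]
    exact mem_closure_pows hr0 hrd
  have heq : QuotientAddGroup.mk' H ⟨p, hp⟩ = QuotientAddGroup.mk' H ⟨r, hr0⟩ := by
    rw [QuotientAddGroup.mk'_eq_mk']
    refine ⟨⟨r - p, by rw [mem_tIdeal, coeff_sub, hr0, hp, sub_zero]⟩, ?_, ?_⟩
    · show (r - p : Polynomial ℤ) ∈ mulRange f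
      have : r - p = -(g * (p /ₘ g)) := by rw [hrp]; ring
      rw [this]
      exact AddSubgroup.neg_mem _ (hgf _)
    · ext1
      show p + (r - p) = r
      ring
  rw [heq]
  exact AddSubgroup.mem_map_of_mem _ key

lemma fwd (f : Polynomial ℤ) (hf : f ≠ 0) (h0 : f.coeff 0 = 0)
    (hFG : AddGroup.FG (↥tIdeal ⧸ ((mulRange f).comap tIdeal.subtype))) :
    f.leadingCoeff = 1 ∨ f.leadingCoeff = -1 := by
  set H := (mulRange f).comap tIdeal.subtype with hH
  obtain ⟨S, hScl, hSfin⟩ := AddGroup.fg_iff.mp hFG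
  set T : Set ↥tIdeal := Quotient.out '' S with hT
  have hTfin : T.Finite := hSfin.image _
  have hmkT : QuotientAddGroup.mk' H '' T = S := by
    rw [hT, ← Set.image_comp]
    have : ∀ s ∈ S, (QuotientAddGroup.mk' H ∘ Quotient.out) s = s := by
      intro s _
      exact QuotientAddGroup.out_eq' s
    rw [Set.image_congr this]; exact Set.image_id S
  have htop : AddSubgroup.closure T ⊔ H = ⊤ := by
    have hmap : AddSubgroup.map (QuotientAddGroup.mk' H) (AddSubgroup.closure T) = ⊤ := by
      rw [AddMonoidHom.map_closure, hmkT, hScl]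
    calc AddSubgroup.closure T ⊔ H
        = AddSubgroup.comap (QuotientAddGroup.mk' H)
            (AddSubgroup.map (QuotientAddGroup.mk' H) (AddSubgroup.closure T)) := by
          rw [AddSubgroup.comap_map_eq, QuotientAddGroup.ker_mk']
      _ = ⊤ := by rw [hmap, AddSubgroup.comap_top]
  set T0 : Set (Polynomial ℤ) := tIdeal.subtype '' T with hT0
  have hT0fin : T0.Finite := hTfin.image _
  set M : ℕ := hT0fin.toFinset.sup natDegree with hM
  set N : ℕ := M + 1 with hN
  have hXN : (X : Polynomial ℤ)^N ∈ AddSubgroup.closure T0 ⊔ mulRange f := by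
    have hXNt : (X : Polynomial ℤ)^N ∈ tIdeal := by
      rw [mem_tIdeal, coeff_X_pow]
      simp [hN]
    have hmem : (⟨X^N, hXNt⟩ : ↥tIdeal) ∈ (⊤ : AddSubgroup ↥tIdeal) := trivial
    rw [← htop] at hmem
    have hmem2 := AddSubgroup.mem_map_of_mem tIdeal.subtype hmem
    rw [AddSubgroup.map_sup, AddMonoidHom.map_closure] at hmem2
    have hle : AddSubgroup.map tIdeal.subtype H ≤ mulRange f := by
      rw [hH]
      exact AddSubgroup.map_comap_le _ _
    exact (sup_le_sup_left hle _ : _ ≤ AddSubgroup.closure T0 ⊔ mulRange f) hmem2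
  obtain ⟨a, ha, b, hb, hab⟩ := AddSubgroup.mem_sup.mp hXN
  obtain ⟨q, hq⟩ := mem_mulRange.mp hb
  have hadeg : a.degree < ((N : ℕ) : WithBot ℕ) := by
    have hcl : AddSubgroup.closure T0 ≤ (Polynomial.degreeLE ℤ (M : WithBot ℕ)).toAddSubgroup := by
      rw [AddSubgroup.closure_le]
      intro t ht
      have htM : t.natDegree ≤ M := Finset.le_sup (hT0fin.mem_toFinset.mpr ht)
      have : t.degree ≤ (M : WithBot ℕ) :=
        le_trans Polynomial.degree_le_natDegree (by exact_mod_cast htM)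
      simpa [Polynomial.mem_degreeLE] using this
    have := hcl ha
    rw [Submodule.mem_toAddSubgroup, Polynomial.mem_degreeLE] at this
    refine lt_of_le_of_lt this ?_
    exact_mod_cast Nat.lt_succ_self M
  have hfq : f * q = X^N - a := by rw [hq, eq_sub_iff_add_eq, add_comm, hab]
  have hdegX : ((N : ℕ) : WithBot ℕ) = ((X : Polynomial ℤ)^N).degree := (degree_X_pow N).symm
  have hlead : (f * q).leadingCoeff = 1 := by
    rw [hfq, leadingCoeff_sub_of_degree_lt (by rw [← hdegX]; exact hadeg),
      leadingCoeff_X_pow]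
  rw [leadingCoeff_mul] at hlead
  exact Int.isUnit_iff.mp (IsUnit.of_mul_eq_one _ hlead)

/-- For nonzero `f ∈ t·ℤ[t]`, the quotient abelian group `t·ℤ[t]/(f·ℤ[t])` is finitely
generated if and only if the leading coefficient of `f` is `1` or `−1`. -/
theorem stmt5 (f : Polynomial ℤ) (hf : f ≠ 0) (h0 : f.coeff 0 = 0) :
    AddGroup.FG (↥tIdeal ⧸ ((mulRange f).comap tIdeal.subtype)) ↔
      f.leadingCoeff = 1 ∨ f.leadingCoeff = -1 := by
  exact ⟨fwd f hf h0, bwd f hf h0⟩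
end
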